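/- arXiv:1507.06154 — 5 statements merged into one kernel-verified Lean document; each statement's English description precedes it below -/
import Mathlib

section
/- A word w = b₁t₁b₂t₂⋯bᵢtᵢ over the alphabet {1,…,k} that is up-down (i.e., b_j < t_j for all j and t_j > b_{j+1} for all j < i) avoids the classical pattern 123 if and only if both b₁ ≥ b₂ ≥ ⋯ ≥ bᵢ and t₁ ≥ t₂ ≥ ⋯ ≥ tᵢ. -/
/-- Interleave bottom elements `b` and top elements `t` into the word
`b₁ t₁ b₂ t₂ ⋯ bᵢ tᵢ` (0-indexed: even positions are bottoms). -/
def interleave {k i : ℕ} (b t : Fin i → Fin k) : Fin (2 * i) → Fin k :=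
  fun m =>
    if m.val % 2 = 0 then b ⟨m.val / 2, by have := m.isLt; omega⟩
    else t ⟨m.val / 2, by have := m.isLt; omega⟩

lemma interleave_even {k i : ℕ} (b t : Fin i → Fin k) (j : Fin i)
    (h : 2 * j.val < 2 * i) : interleave b t ⟨2 * j.val, h⟩ = b j := by
  simp only [interleave]
  rw [if_pos (by omega)]
  congr 1
  refine Fin.ext ?_
  dsimp only
  omega

lemma interleave_odd {k i : ℕ} (b t : Fin i → Fin k) (j : Fin i)
    (h : 2 * j.val + 1 < 2 * i) : interleave b t ⟨2 * j.val + 1, h⟩ = t j := by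
  simp only [interleave]
  rw [if_neg (by omega)]
  congr 1
  refine Fin.ext ?_
  dsimp only
  omega

/-- An up-down word `b₁t₁⋯bᵢtᵢ` over `{1,…,k}` avoids the classical pattern 123
iff both the bottoms and tops are weakly decreasing. -/
theorem stmt_0 (k i : ℕ) (b t : Fin i → Fin k)
    (hbt : ∀ j : Fin i, b j < t j)
    (htb : ∀ j : ℕ, ∀ h : j + 1 < i, b ⟨j + 1, h⟩ < t ⟨j, Nat.lt_of_succ_lt h⟩) :
    (¬ ∃ i₁ i₂ i₃ : Fin (2 * i), i₁ < i₂ ∧ i₂ < i₃ ∧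
        interleave b t i₁ < interleave b t i₂ ∧ interleave b t i₂ < interleave b t i₃)
      ↔ (Antitone b ∧ Antitone t) := by
  constructor
  · intro hav
    constructor
    · intro x y hxy
      by_contra hlt
      push_neg at hlt
      have hxy' : x.val < y.val := by
        rcases lt_or_eq_of_le hxy with h | h
        · exact h
        · exact absurd (h ▸ hlt) (lt_irrefl _)
      refine hav ⟨⟨2 * x.val, by omega⟩, ⟨2 * y.val, by have := y.isLt; omega⟩,
        ⟨2 * y.val + 1, by have := y.isLt; omega⟩, ?_, ?_, ?_, ?_⟩
      · exact Fin.mk_lt_mk.mpr (by omega)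
      · exact Fin.mk_lt_mk.mpr (by omega)
      · rw [interleave_even, interleave_even]; exact hlt
      · rw [interleave_even, interleave_odd]; exact hbt y
    · intro x y hxy
      by_contra hlt
      push_neg at hlt
      have hxy' : x.val < y.val := by
        rcases lt_or_eq_of_le hxy with h | h
        · exact h
        · exact absurd (h ▸ hlt) (lt_irrefl _)
      refine hav ⟨⟨2 * x.val, by have := x.isLt; omega⟩,
        ⟨2 * x.val + 1, by have := x.isLt; omega⟩,
        ⟨2 * y.val + 1, by have := y.isLt; omega⟩, ?_, ?_, ?_, ?_⟩
      · exact Fin.mk_lt_mk.mpr (by omega)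
      · exact Fin.mk_lt_mk.mpr (by omega)
      · rw [interleave_even, interleave_odd]; exact hbt x
      · rw [interleave_odd, interleave_odd]; exact hlt
  · rintro ⟨hb, ht⟩ ⟨i₁, i₂, i₃, h12, h23, v12, v23⟩
    have hp1 := i₁.isLt
    have hp2 := i₂.isLt
    have hp3 := i₃.isLt
    have h12' : i₁.val < i₂.val := h12
    have h23' : i₂.val < i₃.val := h23
    -- key: a bottom strictly after a top is smaller
    have key : ∀ (a c : ℕ) (hc : c < i) (hac : a + 1 ≤ c),
        b ⟨c, hc⟩ < t ⟨a, by omega⟩ := by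
      intro a c hc hac
      exact lt_of_le_of_lt
        (hb (Fin.mk_le_mk.mpr hac : (⟨a + 1, by omega⟩ : Fin i) ≤ ⟨c, hc⟩))
        (htb a (by omega))
    by_cases h2 : i₂.val % 2 = 0
    · -- i₂ is a bottom; contradiction from v12
      have e2 : interleave b t i₂ = b ⟨i₂.val / 2, by omega⟩ := by
        simp only [interleave]; rw [if_pos h2]
      by_cases h1 : i₁.val % 2 = 0
      · have e1 : interleave b t i₁ = b ⟨i₁.val / 2, by omega⟩ := by
          simp only [interleave]; rw [if_pos h1]
        rw [e1, e2] at v12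
        exact absurd v12 (not_lt.mpr (hb (Fin.mk_le_mk.mpr (by omega))))
      · have e1 : interleave b t i₁ = t ⟨i₁.val / 2, by omega⟩ := by
          simp only [interleave]; rw [if_neg h1]
        rw [e1, e2] at v12
        exact absurd v12 (not_lt.mpr (le_of_lt (key (i₁.val / 2) (i₂.val / 2) (by omega) (by omega))))
    · -- i₂ is a top; contradiction from v23
      have e2 : interleave b t i₂ = t ⟨i₂.val / 2, by omega⟩ := by
        simp only [interleave]; rw [if_neg h2]
      by_cases h3 : i₃.val % 2 = 0
      · have e3 : interleave b t i₃ = b ⟨i₃.val / 2, by omega⟩ := by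
          simp only [interleave]; rw [if_pos h3]
        rw [e2, e3] at v23
        exact absurd v23 (not_lt.mpr (le_of_lt (key (i₂.val / 2) (i₃.val / 2) (by omega) (by omega))))
      · have e3 : interleave b t i₃ = t ⟨i₃.val / 2, by omega⟩ := by
          simp only [interleave]; rw [if_neg h3]
        rw [e2, e3] at v23
        exact absurd v23 (not_lt.mpr (ht (Fin.mk_le_mk.mpr (by omega))))
end

section
/- An up-down word w = w₁w₂⋯w_ℓ avoids the consecutive pattern 132 (i.e., there is no index j with w_j < w_{j+2} < w_{j+1}) if and only if the bottom elements of w (the letters at odd positions) are weakly decreasing from left to right. -/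
/-- `w` is an up-down word: `w₀ < w₁ > w₂ < w₃ > ⋯` (0-indexed). -/
def IsUpDown {l k : ℕ} (w : Fin l → Fin k) : Prop :=
  ∀ j : ℕ, ∀ h : j + 1 < l,
    (j % 2 = 0 → w ⟨j, by omega⟩ < w ⟨j + 1, h⟩) ∧
    (j % 2 = 1 → w ⟨j + 1, h⟩ < w ⟨j, by omega⟩)

/-- `w` avoids the consecutive pattern 132. -/
def AvoidsC132 {l k : ℕ} (w : Fin l → Fin k) : Prop :=
  ∀ j : ℕ, ∀ h : j + 2 < l,
    ¬ (w ⟨j, by omega⟩ < w ⟨j + 2, h⟩ ∧ w ⟨j + 2, h⟩ < w ⟨j + 1, by omega⟩)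

/-- An up-down word avoids the consecutive pattern 132 iff its bottom elements
(letters at odd positions, i.e. 0-indexed even positions) are weakly decreasing. -/
theorem stmt_1 (l k : ℕ) (w : Fin l → Fin k) (hud : IsUpDown w) :
    AvoidsC132 w ↔
      (∀ m₁ m₂ : ℕ, ∀ h₁ : 2 * m₁ < l, ∀ h₂ : 2 * m₂ < l,
        m₁ ≤ m₂ → w ⟨2 * m₂, h₂⟩ ≤ w ⟨2 * m₁, h₁⟩) := by
  constructor
  · intro hav m₁ m₂ h₁ h₂ hle
    obtain ⟨d, rfl⟩ := Nat.exists_eq_add_of_le hle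
    clear hle
    induction d with
    | zero => simp
    | succ n ih =>
      have h2n : 2 * (m₁ + n) < l := by omega
      have hdown := (hud (2 * (m₁ + n) + 1) (by omega)).2 (by omega)
      have hstep : w ⟨2 * (m₁ + n) + 2, by omega⟩ ≤ w ⟨2 * (m₁ + n), h2n⟩ := by
        by_contra hlt
        push_neg at hlt
        exact hav (2 * (m₁ + n)) (by omega) ⟨hlt, hdown⟩
      have heq : (⟨2 * (m₁ + (n + 1)), h₂⟩ : Fin l) = ⟨2 * (m₁ + n) + 2, by omega⟩ := by
        apply Fin.ext; simp; omega
      rw [heq]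
      exact le_trans hstep (ih h2n)
  · intro hdec j h ⟨h1, h2⟩
    rcases Nat.even_or_odd j with he | ho
    · have hj : j % 2 = 0 := Nat.even_iff.mp he
      obtain ⟨m, rfl⟩ : ∃ m, j = 2 * m := ⟨j / 2, by omega⟩
      have := hdec m (m + 1) (by omega) (by omega) (by omega)
      have heq : (⟨2 * (m + 1), by omega⟩ : Fin l) = ⟨2 * m + 2, h⟩ := by
        apply Fin.ext; simp; omega
      rw [heq] at this
      exact absurd h1 (not_lt.2 this)
    · have hj : j % 2 = 1 := Nat.odd_iff.mp ho
      have hup := (hud (j + 1) (by omega)).1 (by omega)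
      exact absurd h2 (not_lt.2 hup.le)
end

section
/- Let A_{k,ℓ} denote the number of up-down words of length ℓ over {1,…,k} avoiding the consecutive pattern 132. Then for all k ≥ 3 and i ≥ 1, A_{k,2i} = A_{k−1,2i} + (k−1)·A_{k,2i−2}, with A_{2,2i} = 1 for all i ≥ 1 and A_{k,0} = 1 for all k ≥ 2. -/
/-- The number of up-down words of length `l` over `{1,…,k}` avoiding the
consecutive pattern 132. -/
noncomputable def A (k l : ℕ) : ℕ :=
  {w : Fin l → Fin k | IsUpDown w ∧ AvoidsC132 w}.ncard

-- valleys are weakly decreasing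
lemma valley_step {l k : ℕ} {w : Fin l → Fin k} (hu : IsUpDown w) (ha : AvoidsC132 w)
    (j : ℕ) (hj : j % 2 = 0) (h : j + 2 < l) : w ⟨j + 2, h⟩ ≤ w ⟨j, by omega⟩ := by
  by_contra hlt
  push_neg at hlt
  exact ha j h ⟨hlt, (hu (j + 1) (by omega)).2 (by omega)⟩

lemma valley_chain {l k : ℕ} {w : Fin l → Fin k} (hu : IsUpDown w) (ha : AvoidsC132 w)
    (t : ℕ) : ∀ s, t ≤ s → ∀ h : 2 * s < l, ∀ h2 : 2 * t < l,
    w ⟨2 * s, h⟩ ≤ w ⟨2 * t, h2⟩ := by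
  intro s hts
  induction s, hts using Nat.le_induction with
  | base => intro h h2; exact le_refl _
  | succ s hs ih =>
      intro h h2
      have h1 : 2 * s + 2 < l := by omega
      have e : (⟨2 * (s + 1), h⟩ : Fin l) = ⟨2 * s + 2, h1⟩ := by
        apply Fin.ext; simp; omega
      rw [e]
      exact le_trans (valley_step hu ha (2 * s) (by omega) h1) (ih (by omega) h2)

lemma all_pos {n m : ℕ} {w : Fin (2 * n + 2) → Fin (m + 1)}
    (hu : IsUpDown w) (ha : AvoidsC132 w)
    (h0 : w ⟨2 * n, by omega⟩ ≠ 0) : ∀ j, w j ≠ 0 := by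
  intro j
  have hj := j.isLt
  by_cases hp : (j : ℕ) % 2 = 0
  · -- j = 2t, valley
    have ht : (j : ℕ) = 2 * ((j : ℕ) / 2) := by omega
    have h2 : 2 * ((j : ℕ) / 2) < 2 * n + 2 := by omega
    have hch := valley_chain hu ha ((j : ℕ) / 2) n (by omega) (by omega) h2
    have ej : j = ⟨2 * ((j : ℕ) / 2), h2⟩ := by apply Fin.ext; simpa using ht
    rw [ej]
    intro hz
    apply h0
    rw [hz] at hch
    exact le_antisymm hch (Fin.zero_le _)
  · -- j odd: strictly above the previous valley
    have ht : (j : ℕ) = 2 * ((j : ℕ) / 2) + 1 := by omega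
    have h2 : 2 * ((j : ℕ) / 2) + 1 < 2 * n + 2 := by omega
    have := (hu (2 * ((j : ℕ) / 2)) h2).1 (by omega)
    have ej : j = ⟨2 * ((j : ℕ) / 2) + 1, h2⟩ := by apply Fin.ext; simpa using ht
    rw [ej]
    exact Fin.pos_iff_ne_zero.mp (lt_of_le_of_lt (Fin.zero_le _) this)

def shiftMap {l m : ℕ} (w : Fin l → Fin m) : Fin l → Fin (m + 1) := fun j => (w j).succ

lemma shiftMap_inj {l m : ℕ} : Function.Injective (@shiftMap l m) := by
  intro a b hab
  funext j
  have := congrFun hab j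
  simpa [shiftMap] using this

lemma shiftMap_cond {l m : ℕ} (w : Fin l → Fin m) :
    (IsUpDown (shiftMap w) ↔ IsUpDown w) ∧ (AvoidsC132 (shiftMap w) ↔ AvoidsC132 w) := by
  constructor
  · unfold IsUpDown shiftMap
    simp [Fin.succ_lt_succ_iff]
  · unfold AvoidsC132 shiftMap
    simp [Fin.succ_lt_succ_iff]

lemma shift_count (m n : ℕ) :
    {w : Fin (2 * n + 2) → Fin (m + 1) |
      (IsUpDown w ∧ AvoidsC132 w) ∧ w ⟨2 * n, by omega⟩ ≠ 0}.ncard = A m (2 * n + 2) := by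
  rw [A]
  rw [show {w : Fin (2 * n + 2) → Fin (m + 1) |
      (IsUpDown w ∧ AvoidsC132 w) ∧ w ⟨2 * n, by omega⟩ ≠ 0} =
    shiftMap '' {w : Fin (2 * n + 2) → Fin m | IsUpDown w ∧ AvoidsC132 w} from ?_]
  · exact Set.ncard_image_of_injective _ shiftMap_inj
  · ext w
    simp only [Set.mem_setOf_eq, Set.mem_image]
    constructor
    · rintro ⟨⟨hu, ha⟩, h0⟩
      have hpos : ∀ j, w j ≠ 0 := all_pos hu ha h0
      refine ⟨fun j => (w j).pred (hpos j), ?_, ?_⟩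
      · have he : shiftMap (fun j => (w j).pred (hpos j)) = w := by
          funext j; simp [shiftMap]
        constructor
        · rw [← (shiftMap_cond _).1, he]; exact hu
        · rw [← (shiftMap_cond _).2, he]; exact ha
      · funext j; simp [shiftMap]
    · rintro ⟨w', ⟨hu, ha⟩, rfl⟩
      refine ⟨⟨(shiftMap_cond w').1.mpr hu, (shiftMap_cond w').2.mpr ha⟩, ?_⟩
      exact Fin.succ_ne_zero _

def extMap {n m : ℕ} (x : Fin (m + 1) × (Fin (2 * n) → Fin (m + 1))) :
    Fin (2 * n + 2) → Fin (m + 1) :=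
  fun j => if h : (j : ℕ) < 2 * n then x.2 ⟨j, h⟩ else if (j : ℕ) = 2 * n then 0 else x.1

lemma extMap_eval₁ {n m : ℕ} (x : Fin (m + 1) × (Fin (2 * n) → Fin (m + 1))) {a : ℕ}
    (ha : a < 2 * n + 2) (h : a < 2 * n) : extMap x ⟨a, ha⟩ = x.2 ⟨a, h⟩ := by
  simp only [extMap]; rw [dif_pos h]

lemma extMap_eval₂ {n m : ℕ} (x : Fin (m + 1) × (Fin (2 * n) → Fin (m + 1))) {a : ℕ}
    (ha : a < 2 * n + 2) (h : a = 2 * n) : extMap x ⟨a, ha⟩ = 0 := by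
  subst h; simp only [extMap]; rw [dif_neg (by omega)]; simp

lemma extMap_eval₃ {n m : ℕ} (x : Fin (m + 1) × (Fin (2 * n) → Fin (m + 1))) {a : ℕ}
    (ha : a < 2 * n + 2) (h : a = 2 * n + 1) : extMap x ⟨a, ha⟩ = x.1 := by
  subst h; simp only [extMap]; rw [dif_neg (by omega), if_neg (by omega)]

lemma extMap_inj {n m : ℕ} : Function.Injective (@extMap n m) := by
  intro a b hab
  have h1 : a.1 = b.1 := by
    have := congrFun hab ⟨2 * n + 1, by omega⟩
    rwa [extMap_eval₃ a _ rfl, extMap_eval₃ b _ rfl] at this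
  have h2 : a.2 = b.2 := by
    funext j
    have := congrFun hab ⟨(j : ℕ), by omega⟩
    rwa [extMap_eval₁ a _ j.isLt, extMap_eval₁ b _ j.isLt] at this
  exact Prod.ext h1 h2

lemma extMap_image (m n : ℕ) :
    extMap '' (({p : Fin (m + 1) | p ≠ 0}) ×ˢ
        {w' : Fin (2 * n) → Fin (m + 1) | IsUpDown w' ∧ AvoidsC132 w'}) =
      {w : Fin (2 * n + 2) → Fin (m + 1) |
        (IsUpDown w ∧ AvoidsC132 w) ∧ w ⟨2 * n, by omega⟩ = 0} := by
  ext w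
  simp only [Set.mem_image, Set.mem_prod, Set.mem_setOf_eq]
  constructor
  · rintro ⟨⟨p, w'⟩, ⟨hp, hu', ha'⟩, rfl⟩
    refine ⟨⟨?_, ?_⟩, extMap_eval₂ _ _ rfl⟩
    · -- IsUpDown
      intro j h
      rcases (by omega : j + 1 < 2 * n ∨ j + 1 = 2 * n ∨ j + 1 = 2 * n + 1) with hc | hc | hc
      · rw [extMap_eval₁ _ _ (show j < 2 * n by omega), extMap_eval₁ _ _ hc]
        exact hu' j hc
      · constructor
        · intro hp2; omega
        · intro hp2
          rw [extMap_eval₂ _ _ hc]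
          match j, hp2, hc with
          | (j' + 1), hp2, hc =>
            have hj' : j' + 1 < 2 * n := by omega
            rw [extMap_eval₁ _ _ (by omega)]
            exact lt_of_le_of_lt (Fin.zero_le _) ((hu' j' hj').1 (by omega))
      · constructor
        · intro _
          rw [extMap_eval₂ _ _ (show j = 2 * n by omega), extMap_eval₃ _ _ hc]
          exact Fin.pos_of_ne_zero hp
        · intro hp2; omega
    · -- AvoidsC132
      intro j h
      rcases (by omega : j + 2 < 2 * n ∨ j + 2 = 2 * n ∨ j + 2 = 2 * n + 1) with hc | hc | hc
      · rw [extMap_eval₁ _ _ hc, extMap_eval₁ _ _ (show j < 2 * n by omega),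
          extMap_eval₁ _ _ (show j + 1 < 2 * n by omega)]
        exact ha' j hc
      · rw [extMap_eval₂ _ _ hc]
        rintro ⟨h1, _⟩
        exact (Fin.not_lt_zero _ h1).elim
      · rw [extMap_eval₂ _ _ (show j + 1 = 2 * n by omega)]
        rintro ⟨_, h2⟩
        exact (Fin.not_lt_zero _ h2).elim
  · rintro ⟨⟨hu, ha⟩, h0⟩
    refine ⟨⟨w ⟨2 * n + 1, by omega⟩, fun j => w ⟨(j : ℕ), by omega⟩⟩, ⟨?_, ?_, ?_⟩, ?_⟩
    · -- last letter nonzero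
      have hlt := (hu (2 * n) (by omega)).1 (by omega)
      exact Fin.pos_iff_ne_zero.mp (lt_of_le_of_lt (Fin.zero_le _) hlt)
    · intro j h; exact hu j (by omega)
    · intro j h; exact ha j (by omega)
    · funext j
      rcases (by omega : (j : ℕ) < 2 * n ∨ (j : ℕ) = 2 * n ∨ (j : ℕ) = 2 * n + 1)
        with hc | hc | hc
      · exact extMap_eval₁ _ j.isLt hc
      · rw [show j = (⟨2 * n, by omega⟩ : Fin (2 * n + 2)) from Fin.ext hc]
        rw [extMap_eval₂ _ _ rfl]
        exact h0.symm
      · rw [show j = (⟨2 * n + 1, by omega⟩ : Fin (2 * n + 2)) from Fin.ext hc]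
        exact extMap_eval₃ _ _ rfl

lemma ncard_prod' {α β : Type*} (s : Set α) (t : Set β) :
    (s ×ˢ t).ncard = s.ncard * t.ncard := by
  rw [← Nat.card_coe_set_eq, ← Nat.card_coe_set_eq, ← Nat.card_coe_set_eq,
    Nat.card_congr (Equiv.Set.prod s t), Nat.card_prod]

lemma ncard_ne_zero (m : ℕ) : {p : Fin (m + 1) | p ≠ 0}.ncard = m := by
  have h := Set.ncard_add_ncard_compl ({p : Fin (m + 1) | p ≠ 0})
  have hc : {p : Fin (m + 1) | p ≠ 0}ᶜ = {(0 : Fin (m + 1))} := by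
    ext p; simp
  rw [hc, Set.ncard_singleton, Nat.card_eq_fintype_card,
    Fintype.card_fin] at h
  omega

lemma main_rec (m n : ℕ) : A (m + 1) (2 * n + 2) = A m (2 * n + 2) + m * A (m + 1) (2 * n) := by
  have hsplit :
      {w : Fin (2 * n + 2) → Fin (m + 1) | IsUpDown w ∧ AvoidsC132 w} =
        {w : Fin (2 * n + 2) → Fin (m + 1) |
          (IsUpDown w ∧ AvoidsC132 w) ∧ w ⟨2 * n, by omega⟩ = 0} ∪
        {w : Fin (2 * n + 2) → Fin (m + 1) |
          (IsUpDown w ∧ AvoidsC132 w) ∧ w ⟨2 * n, by omega⟩ ≠ 0} := by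
    ext w
    simp only [Set.mem_setOf_eq, Set.mem_union]
    by_cases h : w ⟨2 * n, by omega⟩ = 0 <;> tauto
  have hdisj : Disjoint
      {w : Fin (2 * n + 2) → Fin (m + 1) |
        (IsUpDown w ∧ AvoidsC132 w) ∧ w ⟨2 * n, by omega⟩ = 0}
      {w : Fin (2 * n + 2) → Fin (m + 1) |
        (IsUpDown w ∧ AvoidsC132 w) ∧ w ⟨2 * n, by omega⟩ ≠ 0} := by
    rw [Set.disjoint_left]
    rintro w ⟨_, h0⟩ ⟨_, h1⟩
    exact h1 h0
  rw [show A (m + 1) (2 * n + 2) =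
    {w : Fin (2 * n + 2) → Fin (m + 1) | IsUpDown w ∧ AvoidsC132 w}.ncard from rfl]
  rw [hsplit, Set.ncard_union_eq hdisj (Set.toFinite _) (Set.toFinite _)]
  rw [shift_count m n]
  rw [← extMap_image m n, Set.ncard_image_of_injective _ extMap_inj, ncard_prod',
    ncard_ne_zero]
  rw [show A (m + 1) (2 * n) =
    {w : Fin (2 * n) → Fin (m + 1) | IsUpDown w ∧ AvoidsC132 w}.ncard from rfl]
  ring

lemma A_zero (k : ℕ) : A k 0 = 1 := by
  rw [A]
  have he : {w : Fin 0 → Fin k | IsUpDown w ∧ AvoidsC132 w} = Set.univ := by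
    ext w
    simp only [Set.mem_setOf_eq, Set.mem_univ, iff_true]
    exact ⟨fun j h => absurd h (by omega), fun j h => absurd h (by omega)⟩
  rw [he, Set.ncard_univ]
  exact Nat.card_unique

lemma A_two (n : ℕ) : A 2 (2 * n + 2) = 1 := by
  rw [A]
  have he : {w : Fin (2 * n + 2) → Fin 2 | IsUpDown w ∧ AvoidsC132 w} =
      {fun j : Fin (2 * n + 2) => if (j : ℕ) % 2 = 0 then (0 : Fin 2) else 1} := by
    ext w
    simp only [Set.mem_setOf_eq, Set.mem_singleton_iff]
    constructor
    · rintro ⟨hu, _⟩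
      funext j
      by_cases hp : (j : ℕ) % 2 = 0
      · have hj1 : (j : ℕ) + 1 < 2 * n + 2 := by
          have := j.isLt; omega
        have hlt : w j < w ⟨(j : ℕ) + 1, hj1⟩ := (hu (j : ℕ) hj1).1 hp
        have h2 : ((w ⟨(j : ℕ) + 1, hj1⟩) : ℕ) < 2 := (w _).isLt
        apply Fin.ext
        simp only [hp, if_pos]
        have h3 : ((w j : ℕ)) < ((w ⟨(j : ℕ) + 1, hj1⟩) : ℕ) := hlt
        simp only [Fin.val_zero]
        omega
      · obtain ⟨a', ha'⟩ : ∃ a', (j : ℕ) = a' + 1 := ⟨(j : ℕ) - 1, by omega⟩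
        have hj1 : a' + 1 < 2 * n + 2 := by rw [← ha']; exact j.isLt
        have hlt : w ⟨a', by omega⟩ < w ⟨a' + 1, hj1⟩ := (hu a' hj1).1 (by omega)
        have hje : j = ⟨a' + 1, hj1⟩ := Fin.ext ha'
        apply Fin.ext
        rw [if_neg hp]
        have h2 : ((w ⟨a' + 1, hj1⟩) : ℕ) < 2 := (w _).isLt
        have h3 : ((w ⟨a', by omega⟩ : Fin 2) : ℕ) < ((w ⟨a' + 1, hj1⟩) : ℕ) := hlt
        have h4 : ((w j : ℕ)) = ((w ⟨a' + 1, hj1⟩) : ℕ) := by rw [hje]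
        rw [show ((1 : Fin 2) : ℕ) = 1 from rfl]
        omega
    · rintro rfl
      constructor
      · intro j h
        constructor
        · intro hp
          have h1 : ((j : ℕ) + 1) % 2 ≠ 0 := by omega
          simp [hp, h1]
        · intro hp
          have h1 : ((j : ℕ) + 1) % 2 = 0 := by omega
          have h2 : (j : ℕ) % 2 ≠ 0 := by omega
          simp [h1, h2]
      · intro j h
        rintro ⟨h1, h2⟩
        have he2 : ((j : ℕ) + 2) % 2 = (j : ℕ) % 2 := by omega
        simp only [he2] at h1
        exact lt_irrefl _ h1
  rw [he, Set.ncard_singleton]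

/-- Recurrence for the numbers `A_{k,2i}` of `⟨132⟩`-avoiding up-down words of
even length, together with the initial conditions. -/
theorem stmt_4 :
    (∀ k i : ℕ, 3 ≤ k → 1 ≤ i →
      A k (2 * i) = A (k - 1) (2 * i) + (k - 1) * A k (2 * i - 2)) ∧
    (∀ i : ℕ, 1 ≤ i → A 2 (2 * i) = 1) ∧
    (∀ k : ℕ, 2 ≤ k → A k 0 = 1) := by
  refine ⟨?_, ?_, ?_⟩
  · intro k i hk hi
    obtain ⟨m, rfl⟩ : ∃ m, k = m + 1 := ⟨k - 1, by omega⟩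
    obtain ⟨n, rfl⟩ : ∃ n, i = n + 1 := ⟨i - 1, by omega⟩
    have e1 : 2 * (n + 1) = 2 * n + 2 := by ring
    have e2 : 2 * (n + 1) - 2 = 2 * n := by omega
    have e3 : m + 1 - 1 = m := by omega
    rw [e1, e3, show 2 * n + 2 - 2 = 2 * n by omega]
    exact main_rec m n
  · intro i hi
    obtain ⟨n, rfl⟩ : ∃ n, i = n + 1 := ⟨i - 1, by omega⟩
    rw [show 2 * (n + 1) = 2 * n + 2 by ring]
    exact A_two n
  · intro k _
    exact A_zero k
end

section
/- Let A_{k,ℓ} denote the number of up-down words of length ℓ over {1,…,k} avoiding the consecutive pattern 132. Then for all k ≥ 2 and i ≥ 1, A_{k,2i+1} = Σ_{j=2}^{k} A_{j,2i}. -/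
lemma wcongr {l k : ℕ} (w : Fin l → Fin k) {a b : ℕ} (ha : a < l) (hb : b < l)
    (h : a = b) : w ⟨a, ha⟩ = w ⟨b, hb⟩ := by subst h; rfl

/-- bottoms are weakly decreasing -/
lemma bot_step {l k : ℕ} {w : Fin l → Fin k} (hu : IsUpDown w) (ha : AvoidsC132 w)
    {j : ℕ} (h : j + 2 < l) (hj : j % 2 = 0) :
    w ⟨j + 2, h⟩ ≤ w ⟨j, by omega⟩ := by
  by_contra hc
  push_neg at hc
  refine ha j h ⟨hc, ?_⟩
  have h2 := (hu (j + 1) (by omega)).2 (by omega)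
  have e : w ⟨j + 1 + 1, by omega⟩ = w ⟨j + 2, h⟩ := wcongr w _ _ (by omega)
  rwa [e] at h2

/-- the last letter of an odd-length up-down word avoiding 132 is a minimum -/
lemma last_min {i k : ℕ} {w : Fin (2 * i + 1) → Fin k} (hu : IsUpDown w)
    (ha : AvoidsC132 w) : ∀ m, ∀ hm : m < 2 * i + 1,
      w ⟨2 * i, by omega⟩ ≤ w ⟨m, hm⟩ := by
  have heven : ∀ d, 2 * d ≤ 2 * i → w ⟨2 * i, by omega⟩ ≤ w ⟨2 * i - 2 * d, by omega⟩ := by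
    intro d
    induction d with
    | zero => intro _; exact le_of_eq (wcongr w _ _ (by omega))
    | succ n ih =>
      intro hd
      have h1 := ih (by omega)
      have h2 := bot_step hu ha (j := 2 * i - 2 * (n + 1)) (by omega) (by omega)
      have e : w ⟨2 * i - 2 * (n + 1) + 2, by omega⟩ = w ⟨2 * i - 2 * n, by omega⟩ :=
        wcongr w _ _ (by omega)
      rw [e] at h2
      exact le_trans h1 h2
  intro m hm
  rcases Nat.even_or_odd m with he | ho
  · obtain ⟨c, hc⟩ := he
    have h1 := heven (i - c) (by omega)
    have e : w ⟨2 * i - 2 * (i - c), by omega⟩ = w ⟨m, hm⟩ := wcongr w _ _ (by omega)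
    rwa [e] at h1
  · obtain ⟨c, hc⟩ := ho
    have hm1 : m + 1 < 2 * i + 1 := by omega
    have h1 : w ⟨m + 1, hm1⟩ < w ⟨m, hm⟩ := (hu m hm1).2 (by omega)
    have h2 := heven (i - (c + 1)) (by omega)
    have e : w ⟨2 * i - 2 * (i - (c + 1)), by omega⟩ = w ⟨m + 1, hm1⟩ := wcongr w _ _ (by omega)
    rw [e] at h2
    exact le_trans h2 (le_of_lt h1)

/-- append a minimal letter `k - j` and shift everything up by `k - j` -/
def psi (i j k : ℕ) (h1 : 1 ≤ j) (hjk : j ≤ k) (u : Fin (2 * i) → Fin j) :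
    Fin (2 * i + 1) → Fin k :=
  fun m => if h : (m : ℕ) < 2 * i then
      ⟨(u ⟨m, h⟩ : ℕ) + (k - j), by have := (u ⟨m, h⟩).isLt; omega⟩
    else ⟨k - j, by omega⟩

lemma psi_lt {i j k : ℕ} (h1 : 1 ≤ j) (hjk : j ≤ k) (u : Fin (2 * i) → Fin j)
    {a : ℕ} (ha : a < 2 * i) (ha' : a < 2 * i + 1) :
    psi i j k h1 hjk u ⟨a, ha'⟩ =
      ⟨(u ⟨a, ha⟩ : ℕ) + (k - j), by have := (u ⟨a, ha⟩).isLt; omega⟩ := by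
  simp only [psi]
  rw [dif_pos ha]

lemma psi_last {i j k : ℕ} (h1 : 1 ≤ j) (hjk : j ≤ k) (u : Fin (2 * i) → Fin j)
    {a : ℕ} (ha : ¬ a < 2 * i) (ha' : a < 2 * i + 1) :
    psi i j k h1 hjk u ⟨a, ha'⟩ = ⟨k - j, by omega⟩ := by
  simp only [psi]
  rw [dif_neg ha]

lemma psi_inj {i j k : ℕ} (h1 : 1 ≤ j) (hjk : j ≤ k) :
    Function.Injective (psi i j k h1 hjk) := by
  intro u v h
  funext m
  have h0 := congrFun h ⟨(m : ℕ), by omega⟩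
  rw [psi_lt h1 hjk u m.isLt, psi_lt h1 hjk v m.isLt] at h0
  have h2 : (u ⟨(m : ℕ), m.isLt⟩ : ℕ) + (k - j) = (v ⟨(m : ℕ), m.isLt⟩ : ℕ) + (k - j) :=
    congrArg Fin.val h0
  have h3 : u ⟨(m : ℕ), m.isLt⟩ = v ⟨(m : ℕ), m.isLt⟩ := Fin.ext (by omega)
  simpa using h3

def trunc (i j k : ℕ) (w : Fin (2 * i + 1) → Fin k)
    (hmin : ∀ m, ∀ hm : m < 2 * i + 1, k - j ≤ (w ⟨m, hm⟩ : ℕ)) (hjk : j ≤ k) :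
    Fin (2 * i) → Fin j :=
  fun m => ⟨(w ⟨(m : ℕ), by omega⟩ : ℕ) - (k - j), by
    have h1 := (w ⟨(m : ℕ), by omega⟩).isLt
    have h2 := hmin (m : ℕ) (by omega)
    omega⟩

lemma trunc_val {i j k : ℕ} (w : Fin (2 * i + 1) → Fin k)
    (hmin : ∀ m, ∀ hm : m < 2 * i + 1, k - j ≤ (w ⟨m, hm⟩ : ℕ)) (hjk : j ≤ k)
    {a : ℕ} (ha : a < 2 * i) :
    (trunc i j k w hmin hjk ⟨a, ha⟩ : ℕ) = (w ⟨a, by omega⟩ : ℕ) - (k - j) := rfl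

set_option maxHeartbeats 1000000 in
lemma slice_eq_image (k i j : ℕ) (hi : 1 ≤ i) (hj2 : 2 ≤ j) (hjk : j ≤ k) :
    {w : Fin (2 * i + 1) → Fin k | (IsUpDown w ∧ AvoidsC132 w) ∧
        (w ⟨2 * i, by omega⟩ : ℕ) = k - j} =
      psi i j k (by omega) hjk '' {u : Fin (2 * i) → Fin j | IsUpDown u ∧ AvoidsC132 u} := by
  ext w
  constructor
  · rintro ⟨⟨hu, ha⟩, hs⟩
    have hmin : ∀ m, ∀ hm : m < 2 * i + 1, k - j ≤ (w ⟨m, hm⟩ : ℕ) := by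
      intro m hm
      have := last_min hu ha m hm
      rw [Fin.le_def, hs] at this
      exact this
    refine ⟨trunc i j k w hmin hjk, ⟨?_, ?_⟩, ?_⟩
    · -- IsUpDown (trunc …)
      intro a hab
      have hmA := hmin a (by omega)
      have hmB := hmin (a + 1) (by omega)
      have hlt := hu a (by omega)
      simp only [Fin.lt_def] at hlt
      constructor
      · intro hpar
        have h2 := hlt.1 hpar
        simp only [Fin.lt_def, trunc_val]
        omega
      · intro hpar
        have h2 := hlt.2 hpar
        simp only [Fin.lt_def, trunc_val]
        omega
    · -- AvoidsC132 (trunc …)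
      intro a hab hcon
      have hmA := hmin a (by omega)
      have hmB := hmin (a + 1) (by omega)
      have hmC := hmin (a + 2) (by omega)
      simp only [Fin.lt_def, trunc_val] at hcon
      refine ha a (by omega) ?_
      simp only [Fin.lt_def]
      omega
    · -- psi (trunc …) = w
      funext m
      have e : m = ⟨(m : ℕ), m.isLt⟩ := by simp
      by_cases hm : (m : ℕ) < 2 * i
      · rw [e, psi_lt _ _ _ hm]
        have hmA := hmin (m : ℕ) (by omega)
        apply Fin.ext
        simp only [trunc_val]
        omega
      · rw [e, psi_last _ _ _ hm]
        apply Fin.ext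
        simp only
        have e2 : w ⟨(m : ℕ), m.isLt⟩ = w ⟨2 * i, by omega⟩ := wcongr w _ _ (by omega)
        rw [e2, hs]
  · rintro ⟨u, ⟨hu, ha⟩, rfl⟩
    have h1 : (1 : ℕ) ≤ j := by omega
    have hupos : 0 < (u ⟨2 * i - 1, by omega⟩ : ℕ) := by
      have h2 := (hu (2 * i - 2) (by omega)).1 (by omega)
      have e : u ⟨2 * i - 2 + 1, by omega⟩ = u ⟨2 * i - 1, by omega⟩ := wcongr u _ _ (by omega)
      rw [e, Fin.lt_def] at h2
      omega
    refine ⟨⟨?_, ?_⟩, ?_⟩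
    · -- IsUpDown (psi u)
      intro a hab
      by_cases hlt : a + 1 < 2 * i
      · have haa : a < 2 * i := by omega
        simp only [psi_lt h1 hjk u haa, psi_lt h1 hjk u hlt]
        have h2 := hu a hlt
        simp only [Fin.lt_def] at h2
        constructor
        · intro hpar
          simp only [Fin.mk_lt_mk]
          have := h2.1 hpar; omega
        · intro hpar
          simp only [Fin.mk_lt_mk]
          have := h2.2 hpar; omega
      · -- a + 1 = 2 * i, a odd
        have haa : a < 2 * i := by omega
        have hbb : ¬ a + 1 < 2 * i := hlt
        simp only [psi_lt h1 hjk u haa, psi_last h1 hjk u hbb]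
        constructor
        · intro hpar; omega
        · intro hpar
          simp only [Fin.mk_lt_mk]
          have e : u ⟨a, haa⟩ = u ⟨2 * i - 1, by omega⟩ := wcongr u _ _ (by omega)
          rw [e]
          omega
    · -- AvoidsC132 (psi u)
      intro a hab hcon
      by_cases hlt : a + 2 < 2 * i
      · have haa : a < 2 * i := by omega
        have hbb : a + 1 < 2 * i := by omega
        simp only [psi_lt h1 hjk u haa, psi_lt h1 hjk u hbb, psi_lt h1 hjk u hlt,
          Fin.mk_lt_mk] at hcon
        refine ha a hlt ?_
        simp only [Fin.lt_def]
        omega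
      · have haa : a < 2 * i := by omega
        have hbb : ¬ a + 2 < 2 * i := hlt
        simp only [psi_lt h1 hjk u haa, psi_last h1 hjk u hbb, Fin.mk_lt_mk] at hcon
        omega
    · have hbb : ¬ 2 * i < 2 * i := by omega
      simp only [psi_last h1 hjk u hbb]

lemma card_slice (k i j : ℕ) (hi : 1 ≤ i) (hj2 : 2 ≤ j) (hjk : j ≤ k) :
    {w : Fin (2 * i + 1) → Fin k | (IsUpDown w ∧ AvoidsC132 w) ∧
        (w ⟨2 * i, by omega⟩ : ℕ) = k - j}.ncard = A j (2 * i) := by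
  rw [slice_eq_image k i j hi hj2 hjk, A,
    Set.ncard_image_of_injOn ((psi_inj (i := i) (by omega) hjk).injOn)]

lemma ncard_biUnion_disj {α : Type*} [Finite α] {ι : Type*} [DecidableEq ι] (t : Finset ι)
    (F : ι → Set α)
    (h : ∀ a ∈ t, ∀ b ∈ t, a ≠ b → Disjoint (F a) (F b)) :
    (⋃ x ∈ t, F x).ncard = ∑ x ∈ t, (F x).ncard := by
  classical
  induction t using Finset.induction with
  | empty => simp
  | @insert a s ha ih =>
    rw [Finset.set_biUnion_insert, Finset.sum_insert ha,
      Set.ncard_union_eq ?_ (Set.toFinite _) (Set.toFinite _),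
      ih (fun x hx y hy hxy => h x (by simp [hx]) y (by simp [hy]) hxy)]
    rw [Set.disjoint_right]
    intro x hx hxa
    simp only [Set.mem_iUnion] at hx
    obtain ⟨b, hb, hxb⟩ := hx
    exact Set.disjoint_left.mp
      (h a (by simp) b (by simp [hb]) (by rintro rfl; exact ha hb)) hxa hxb

/-- For `k ≥ 2`, `i ≥ 1`: `A_{k,2i+1} = Σ_{j=2}^{k} A_{j,2i}`. -/
theorem stmt_5 (k i : ℕ) (hk : 2 ≤ k) (hi : 1 ≤ i) :
    A k (2 * i + 1) = ∑ j ∈ Finset.Icc 2 k, A j (2 * i) := by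
  classical
  have hdecomp : {w : Fin (2 * i + 1) → Fin k | IsUpDown w ∧ AvoidsC132 w} =
      ⋃ j ∈ Finset.Icc 2 k, {w : Fin (2 * i + 1) → Fin k | (IsUpDown w ∧ AvoidsC132 w) ∧
        (w ⟨2 * i, by omega⟩ : ℕ) = k - j} := by
    ext w
    simp only [Set.mem_setOf_eq, Set.mem_iUnion, Finset.mem_Icc]
    constructor
    · rintro ⟨hu, ha⟩
      have hlast : (w ⟨2 * i, by omega⟩ : ℕ) < k - 1 := by
        have h1 : w ⟨2 * i - 1 + 1, by omega⟩ < w ⟨2 * i - 1, by omega⟩ :=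
          (hu (2 * i - 1) (by omega)).2 (by omega)
        have e : w ⟨2 * i - 1 + 1, by omega⟩ = w ⟨2 * i, by omega⟩ := wcongr w _ _ (by omega)
        rw [e, Fin.lt_def] at h1
        have := (w ⟨2 * i - 1, by omega⟩).isLt
        omega
      exact ⟨k - (w ⟨2 * i, by omega⟩ : ℕ), ⟨by omega, by omega⟩, ⟨hu, ha⟩, by omega⟩
    · rintro ⟨j, _, ⟨hu, ha⟩, _⟩
      exact ⟨hu, ha⟩
  rw [A, hdecomp, ncard_biUnion_disj]
  · exact Finset.sum_congr rfl fun j hj => by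
      rw [Finset.mem_Icc] at hj
      exact card_slice k i j hi hj.1 hj.2
  · intro a ha b hb hab
    rw [Finset.mem_Icc] at ha hb
    rw [Set.disjoint_left]
    rintro w ⟨-, hwa⟩ ⟨-, hwb⟩
    rw [hwa] at hwb
    omega
end

section
/- An up-down word w = w₁w₂⋯w_ℓ over {1,…,k} avoids the vincular pattern 1-32 (i.e., there are no indices j* < j with w_{j*} < w_{j+1} < w_j, where w_j and w_{j+1} are adjacent) if and only if the bottom elements of w are weakly decreasing from left to right. Consequently, for every up-down word, avoiding 1-32 is equivalent to avoiding the consecutive pattern 132. -/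
/-- `w` avoids the vincular pattern 1-32: no `a < j` with
`w a < w (j+1) < w j` (the last two letters adjacent). -/
def AvoidsV1_32 {l k : ℕ} (w : Fin l → Fin k) : Prop :=
  ∀ a j : ℕ, ∀ haj : a < j, ∀ h : j + 1 < l,
    ¬ (w ⟨a, by omega⟩ < w ⟨j + 1, h⟩ ∧ w ⟨j + 1, h⟩ < w ⟨j, by omega⟩)

lemma mk_eq {l : ℕ} {x y : ℕ} (hx : x < l) (hy : y < l) (h : x = y) :
    (⟨x, hx⟩ : Fin l) = ⟨y, hy⟩ := by subst h; rfl

lemma c_to_dec {l k : ℕ} (w : Fin l → Fin k) (hud : IsUpDown w) (hc : AvoidsC132 w) :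
    ∀ m₁ m₂ : ℕ, ∀ h₁ : 2 * m₁ < l, ∀ h₂ : 2 * m₂ < l,
      m₁ ≤ m₂ → w ⟨2 * m₂, h₂⟩ ≤ w ⟨2 * m₁, h₁⟩ := by
  have step : ∀ m : ℕ, ∀ h : 2 * (m + 1) < l,
      w ⟨2 * (m + 1), h⟩ ≤ w ⟨2 * m, by omega⟩ := by
    intro m h
    have h' : 2 * m + 2 < l := by omega
    have hc' := hc (2 * m) h'
    have hup := (hud (2 * m + 1) (by omega)).2 (by omega)
    by_contra hlt
    push_neg at hlt
    have e : (⟨2 * (m + 1), h⟩ : Fin l) = ⟨2 * m + 2, h'⟩ := mk_eq _ _ (by omega)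
    rw [e] at hlt
    exact hc' ⟨hlt, hup⟩
  intro m₁ m₂ h₁ h₂ hle
  induction m₂ with
  | zero =>
      have : m₁ = 0 := by omega
      subst this; exact le_refl _
  | succ n ih =>
      rcases Nat.lt_or_ge m₁ (n + 1) with hlt | hge
      · have hn : 2 * n < l := by omega
        exact le_trans (step n h₂) (ih hn (by omega))
      · have : m₁ = n + 1 := by omega
        subst this; exact le_refl _

lemma dec_to_v {l k : ℕ} (w : Fin l → Fin k) (hud : IsUpDown w)
    (hd : ∀ m₁ m₂ : ℕ, ∀ h₁ : 2 * m₁ < l, ∀ h₂ : 2 * m₂ < l,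
        m₁ ≤ m₂ → w ⟨2 * m₂, h₂⟩ ≤ w ⟨2 * m₁, h₁⟩) : AvoidsV1_32 w := by
  intro a j haj h hcon
  obtain ⟨h1, h2⟩ := hcon
  have hjodd : j % 2 = 1 := by
    rcases Nat.mod_two_eq_zero_or_one j with he | ho
    · exact absurd ((hud j h).1 he) (not_lt.mpr h2.le)
    · exact ho
  rcases Nat.mod_two_eq_zero_or_one a with hae | hao
  · have key := hd (a / 2) ((j + 1) / 2) (by omega) (by omega) (by omega)
    have e1 : (⟨2 * ((j + 1) / 2), by omega⟩ : Fin l) = ⟨j + 1, h⟩ :=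
      mk_eq _ _ (by omega)
    have e2 : (⟨2 * (a / 2), by omega⟩ : Fin l) = ⟨a, by omega⟩ :=
      mk_eq _ _ (by omega)
    rw [e1, e2] at key
    exact absurd h1 (not_lt.mpr key)
  · have hup := (hud a (by omega)).2 hao
    have key := hd ((a + 1) / 2) ((j + 1) / 2) (by omega) (by omega) (by omega)
    simp only [show 2 * ((j + 1) / 2) = j + 1 from by omega,
      show 2 * ((a + 1) / 2) = a + 1 from by omega] at key
    exact absurd h1 (not_lt.mpr (le_of_lt (lt_of_le_of_lt key hup)))

lemma v_to_c {l k : ℕ} (w : Fin l → Fin k) (hv : AvoidsV1_32 w) : AvoidsC132 w := by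
  intro j h hcon
  obtain ⟨h1, h2⟩ := hcon
  have e : (⟨j + 2, h⟩ : Fin l) = ⟨j + 1 + 1, by omega⟩ := mk_eq _ _ (by omega)
  rw [e] at h1 h2
  exact hv j (j + 1) (by omega) (by omega) ⟨h1, h2⟩

/-- An up-down word avoids the vincular pattern 1-32 iff its bottom elements are
weakly decreasing; consequently avoiding 1-32 is equivalent to avoiding `⟨132⟩`. -/
theorem stmt_10 (l k : ℕ) (w : Fin l → Fin k) (hud : IsUpDown w) :
    (AvoidsV1_32 w ↔
      (∀ m₁ m₂ : ℕ, ∀ h₁ : 2 * m₁ < l, ∀ h₂ : 2 * m₂ < l,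
        m₁ ≤ m₂ → w ⟨2 * m₂, h₂⟩ ≤ w ⟨2 * m₁, h₁⟩)) ∧
    (AvoidsV1_32 w ↔ AvoidsC132 w) := by
  constructor
  · constructor
    · intro hv; exact c_to_dec w hud (v_to_c w hv)
    · intro hd; exact dec_to_v w hud hd
  · constructor
    · exact v_to_c w
    · intro hc; exact dec_to_v w hud (c_to_dec w hud hc)
end
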